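/- Let ε > 0 and let G be an edge-coloured graph on n vertices with minimum colour degree at least (2/3 + ε)n. Then for every vertex z of G there exist at least εn²/6 unordered pairs {x, x'} of vertices such that z, x, x' form a rainbow triangle (all three edges present with pairwise distinct colours). -/

import Mathlib

/-!
Write `d` for the colour degree. Fix `z` and a set `S` of neighbours of `z` on which `c z` is
injective, with `|S| = d(z)`.
For `x ∈ S` let `T x` be the neighbours `y` of `x` with `c x y ≠ c x z`. Neither `S` nor `T x`
contains `z`, so `|S ∩ T x| ≥ |S| + d(x) - n`. A pair `(x, y)` with `x ∈ S`, `y ∈ S ∩ T x` spans a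
rainbow triangle with `z` unless `c x y = c z y`, and for fixed `y` at most `n - d(y)` vertices `x`
have `c y x = c z y`. Summing, there are at least `|S|² + 2 ∑_{x ∈ S} d(x) - 2|S|n ≥ δ(3δ - 2n)`
ordered rainbow pairs, where `δ = (2/3 + ε)n`; this is at least `2εn²`, so there are at least
`εn²` unordered ones.
-/

open Finset

namespace Finset

variable {α β : Type*}

theorem card_image_le_card_filter_ne_add_one [DecidableEq β] (s : Finset α) (f : α → β) (b : β) :
    #(s.image f) ≤ #{a ∈ s | f a ≠ b} + 1 := by
  have hsub : s.image f ⊆ insert b ({a ∈ s | f a ≠ b}.image f) := by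
    intro y hy
    obtain ⟨a, ha, rfl⟩ := mem_image.1 hy
    by_cases hab : f a = b
    · simp [hab]
    · exact mem_insert_of_mem (mem_image_of_mem f (mem_filter.2 ⟨ha, hab⟩))
  calc #(s.image f) ≤ #({a ∈ s | f a ≠ b}.image f) + 1 :=
        (card_le_card hsub).trans (card_insert_le _ _)
    _ ≤ #{a ∈ s | f a ≠ b} + 1 := by grw [card_image_le]

theorem card_filter_le_two_mul_ncard_pairs [Fintype α] [DecidableEq α] (r : α → α → Prop)
    [DecidableRel r] (hr : ∀ x y, r x y → x ≠ y) :
    #{p : α × α | r p.1 p.2} ≤ 2 * {s : Finset α | ∃ x y, s = {x, y} ∧ x ≠ y ∧ r x y}.ncard := by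
  set F : Finset (α × α) := {p | r p.1 p.2}
  have hfibre : ∀ q ∈ F.image (fun p => ({p.1, p.2} : Finset α)),
      #{p ∈ F | ({p.1, p.2} : Finset α) = q} ≤ 2 := by
    simp only [mem_image]
    rintro _ ⟨a, -, rfl⟩
    refine (card_le_card fun p hp => ?_).trans (card_le_two (a := a) (b := a.swap))
    obtain ⟨hpF, hpa⟩ := mem_filter.1 hp
    have hne := hr _ _ (mem_filter.1 hpF).2
    rw [← coe_inj, coe_pair, coe_pair, Set.pair_eq_pair_iff] at hpa
    rcases hpa with ⟨h1, h2⟩ | ⟨h1, h2⟩ <;> simp [Prod.ext_iff, h1, h2]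
  have himage : ↑(F.image fun p => ({p.1, p.2} : Finset α)) ⊆
      {s : Finset α | ∃ x y, s = {x, y} ∧ x ≠ y ∧ r x y} := by
    intro q hq
    obtain ⟨p, hp, rfl⟩ := mem_image.1 (mem_coe.1 hq)
    have hp := (mem_filter.1 hp).2
    exact ⟨p.1, p.2, rfl, hr _ _ hp, hp⟩
  calc #F ≤ 2 * #(F.image fun p => ({p.1, p.2} : Finset α)) := card_le_mul_card_image _ 2 hfibre
    _ ≤ _ := by
      rw [← Set.ncard_coe_finset]
      exact Nat.mul_le_mul_left 2 (Set.ncard_le_ncard himage (Set.toFinite _))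

end Finset

namespace SimpleGraph

variable {V κ : Type*} (G : SimpleGraph V) (c : V → V → κ)

noncomputable def colourDegree (v : V) : ℕ := (c v '' G.neighborSet v).ncard

def IsRainbowTriangle (z x x' : V) : Prop :=
  G.Adj z x ∧ G.Adj z x' ∧ G.Adj x x' ∧ c z x ≠ c z x' ∧ c z x ≠ c x x' ∧ c z x' ≠ c x x'

instance [DecidableRel G.Adj] [DecidableEq κ] (z x x' : V) :
    Decidable (G.IsRainbowTriangle c z x x') := by
  unfold IsRainbowTriangle; infer_instance

variable [Fintype V] [DecidableRel G.Adj]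

theorem isRainbowTriangle_of_mem (hsym : ∀ u v, c u v = c v u) {z x y : V} {S : Finset V}
    (hSN : S ⊆ G.neighborFinset z) (hS : Set.InjOn (c z) S) (hx : x ∈ S) (hy : y ∈ S)
    (hyx : y ∈ G.neighborFinset x) (hxz : c x y ≠ c x z) (hzy : c x y ≠ c z y) :
    G.IsRainbowTriangle c z x y := by
  have hxy : G.Adj x y := (G.mem_neighborFinset x y).1 hyx
  refine ⟨(G.mem_neighborFinset z x).1 (hSN hx), (G.mem_neighborFinset z y).1 (hSN hy), hxy,
    fun h => hxy.ne (hS hx hy h), fun h => hxz ?_, fun h => hzy h.symm⟩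
  rw [← h, hsym]

variable [DecidableEq κ]

theorem colourDegree_eq_card_image (v : V) :
    G.colourDegree c v = #((G.neighborFinset v).image (c v)) := by
  rw [← Set.ncard_coe_finset, coe_image, coe_neighborFinset, colourDegree]

theorem colourDegree_le_card_filter_ne_add_one (v : V) (γ : κ) :
    G.colourDegree c v ≤ #{w ∈ G.neighborFinset v | c v w ≠ γ} + 1 := by
  rw [colourDegree_eq_card_image]
  exact card_image_le_card_filter_ne_add_one _ _ γ

theorem card_filter_eq_add_colourDegree_le (v : V) (γ : κ) :
    #{w ∈ G.neighborFinset v | c v w = γ} + G.colourDegree c v ≤ Fintype.card V := by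
  have hsplit : #{w ∈ G.neighborFinset v | c v w = γ} + #{w ∈ G.neighborFinset v | c v w ≠ γ} =
      G.degree v :=
    card_filter_add_card_filter_not _
  have := G.colourDegree_le_card_filter_ne_add_one c v γ
  have := G.degree_lt_card_verts v
  omega

theorem exists_subset_neighborFinset_injOn (v : V) :
    ∃ S ⊆ G.neighborFinset v, #S = G.colourDegree c v ∧ Set.InjOn (c v) S := by
  obtain ⟨S, hSN, hinj, himage⟩ := exists_subset_injOn_image_eq_of_surjOn (f := c v)
    (G.neighborFinset v : Set V) ((G.neighborFinset v).image (c v)) (by simp [Set.surjOn_image])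
  refine ⟨S, by exact_mod_cast hSN, ?_, hinj⟩
  rw [colourDegree_eq_card_image, ← himage, card_image_of_injOn hinj]

variable [DecidableEq V]

theorem card_add_colourDegree_le {z : V} {S : Finset V} (hS : S ⊆ G.neighborFinset z) (x : V) :
    #S + G.colourDegree c x ≤
      Fintype.card V + #(S ∩ {w ∈ G.neighborFinset x | c x w ≠ c x z}) := by
  have hunion : S ∪ {w ∈ G.neighborFinset x | c x w ≠ c x z} ⊆ univ.erase z := by
    intro w hw
    refine mem_erase.2 ⟨?_, mem_univ w⟩
    rintro rfl
    rcases mem_union.1 hw with hz | hz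
    · exact G.irrefl (G.mem_neighborFinset _ _ |>.1 (hS hz))
    · exact (mem_filter.1 hz).2 rfl
  have h1 := (card_le_card hunion).trans_lt (card_erase_lt_of_mem (mem_univ z))
  have h2 := card_union_add_card_inter S {w ∈ G.neighborFinset x | c x w ≠ c x z}
  have h3 := G.colourDegree_le_card_filter_ne_add_one c x (c x z)
  rw [card_univ] at h1
  omega

theorem card_mul_card_add_two_mul_sum_colourDegree_le (hsym : ∀ u v, c u v = c v u) {z : V}
    {S : Finset V} (hSN : S ⊆ G.neighborFinset z) (hS : Set.InjOn (c z) S) :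
    #S * #S + 2 * ∑ x ∈ S, G.colourDegree c x ≤
      2 * #S * Fintype.card V + #{p : V × V | G.IsRainbowTriangle c z p.1 p.2} := by
  set n := Fintype.card V
  set T : V → Finset V := fun x => {w ∈ G.neighborFinset x | c x w ≠ c x z}
  set C : Finset (V × V) := {p ∈ S ×ˢ S | p.2 ∈ T p.1}
  have hC : #S * #S + ∑ x ∈ S, G.colourDegree c x ≤ #S * n + #C := by
    have hcard : #C = ∑ x ∈ S, #(S ∩ T x) := by
      rw [card_filter, sum_product]
      refine sum_congr rfl fun x _ => ?_
      rw [← filter_mem_eq_inter, card_filter]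
    calc #S * #S + ∑ x ∈ S, G.colourDegree c x = ∑ x ∈ S, (#S + G.colourDegree c x) := by
          rw [sum_add_distrib, sum_const, smul_eq_mul]
      _ ≤ ∑ x ∈ S, (n + #(S ∩ T x)) :=
          sum_le_sum fun x _ => G.card_add_colourDegree_le c hSN x
      _ = #S * n + #C := by rw [sum_add_distrib, sum_const, smul_eq_mul, hcard]
  have hbad : #{p ∈ C | c p.1 p.2 = c z p.2} + ∑ x ∈ S, G.colourDegree c x ≤ #S * n := by
    have hcard : #{p ∈ C | c p.1 p.2 = c z p.2} =
        ∑ y ∈ S, #{x ∈ S | y ∈ T x ∧ c x y = c z y} := by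
      rw [filter_filter, card_filter, sum_product_right]
      refine sum_congr rfl fun y _ => ?_
      rw [card_filter]
    have hstar (y : V) : #{x ∈ S | y ∈ T x ∧ c x y = c z y} + G.colourDegree c y ≤ n := by
      refine le_trans (Nat.add_le_add_right (card_le_card fun x hx => ?_) _)
        (G.card_filter_eq_add_colourDegree_le c y (c z y))
      obtain ⟨-, hyx, hxy⟩ := mem_filter.1 hx
      have hadj := (G.mem_neighborFinset x y).1 (mem_filter.1 hyx).1
      exact mem_filter.2 ⟨(G.mem_neighborFinset y x).2 hadj.symm, hsym y x ▸ hxy⟩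
    calc #{p ∈ C | c p.1 p.2 = c z p.2} + ∑ x ∈ S, G.colourDegree c x
        = ∑ y ∈ S, (#{x ∈ S | y ∈ T x ∧ c x y = c z y} + G.colourDegree c y) := by
          rw [hcard, sum_add_distrib]
      _ ≤ ∑ _y ∈ S, n := sum_le_sum fun y _ => hstar y
      _ = #S * n := by rw [sum_const, smul_eq_mul]
  have hgood : {p ∈ C | c p.1 p.2 ≠ c z p.2} ⊆
      ({p : V × V | G.IsRainbowTriangle c z p.1 p.2} : Finset (V × V)) := by
    intro p hp
    obtain ⟨hpC, hzy⟩ := mem_filter.1 hp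
    obtain ⟨hpS, hyT⟩ := mem_filter.1 hpC
    obtain ⟨hx, hy⟩ := mem_product.1 hpS
    obtain ⟨hyx, hxz⟩ := mem_filter.1 hyT
    exact mem_filter.2 ⟨mem_univ p,
      G.isRainbowTriangle_of_mem c hsym hSN hS hx hy hyx hxz hzy⟩
  have hsplit : #{p ∈ C | c p.1 p.2 = c z p.2} + #{p ∈ C | c p.1 p.2 ≠ c z p.2} = #C :=
    card_filter_add_card_filter_not _
  have := card_le_card hgood
  linarith

theorem mul_card_sq_le_ncard_rainbow (hsym : ∀ u v, c u v = c v u) {ε : ℝ} (hε : 0 ≤ ε)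
    (hdeg : ∀ v, (2 / 3 + ε) * Fintype.card V ≤ G.colourDegree c v) (z : V) :
    ε * Fintype.card V ^ 2 ≤
      {p : Finset V | ∃ x x', p = {x, x'} ∧ x ≠ x' ∧ G.IsRainbowTriangle c z x x'}.ncard := by
  set n := Fintype.card V
  set δ : ℝ := (2 / 3 + ε) * n
  obtain ⟨S, hSN, hS, hinj⟩ := G.exists_subset_neighborFinset_injOn c z
  have hcount : (#S : ℝ) * #S + 2 * ∑ x ∈ S, (G.colourDegree c x : ℝ) ≤
      2 * #S * n + #{p : V × V | G.IsRainbowTriangle c z p.1 p.2} := by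
    exact_mod_cast G.card_mul_card_add_two_mul_sum_colourDegree_le c hsym hSN hinj
  have hpairs : (#{p : V × V | G.IsRainbowTriangle c z p.1 p.2} : ℝ) ≤ 2 *
      {p : Finset V | ∃ x x', p = {x, x'} ∧ x ≠ x' ∧ G.IsRainbowTriangle c z x x'}.ncard := by
    exact_mod_cast card_filter_le_two_mul_ncard_pairs (G.IsRainbowTriangle c z)
      fun x y h => h.2.2.1.ne
  have hsum : #S * δ ≤ ∑ x ∈ S, (G.colourDegree c x : ℝ) := by
    rw [← nsmul_eq_mul]
    exact card_nsmul_le_sum S (fun x => (G.colourDegree c x : ℝ)) δ fun x _ => hdeg x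
  have hSδ : δ ≤ #S := hS ▸ hdeg z
  have hδ : 0 ≤ δ := by positivity
  have hεn : 3 * δ - 2 * n = 3 * ε * n := by ring
  have hεn' : 0 ≤ 3 * ε * n := by positivity
  have : 2 * (ε * n ^ 2) ≤ 2 * _ := calc
    2 * (ε * n ^ 2) ≤ δ * (3 * δ - 2 * n) := by
        rw [hεn]; nlinarith [mul_nonneg hε (sq_nonneg (n : ℝ))]
    _ ≤ #S * (#S + 2 * δ - 2 * n) := by nlinarith [mul_nonneg (sub_nonneg.2 hSδ) hεn']
    _ ≤ #{p : V × V | G.IsRainbowTriangle c z p.1 p.2} := by nlinarith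
    _ ≤ _ := hpairs
  linarith

end SimpleGraph

theorem stmt_11_general (n : ℕ) (ε : ℝ) (G : SimpleGraph (Fin n))
    (c : Fin n → Fin n → ℕ) (hsym : ∀ u v, c u v = c v u)
    (hdeg : ∀ v : Fin n, (2 / 3 + ε) * n ≤ (Set.ncard ((c v) '' {w | G.Adj v w}) : ℝ))
    (z : Fin n) :
    ε * n ^ 2 / 6 ≤
      (Set.ncard {p : Finset (Fin n) | ∃ x x' : Fin n, p = {x, x'} ∧ x ≠ x' ∧
        G.Adj z x ∧ G.Adj z x' ∧ G.Adj x x' ∧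
        c z x ≠ c z x' ∧ c z x ≠ c x x' ∧ c z x' ≠ c x x'} : ℝ) := by
  classical
  rcases le_or_gt ε 0 with hε | hε
  · have : ε * n ^ 2 / 6 ≤ 0 := div_nonpos_of_nonpos_of_nonneg
      (mul_nonpos_of_nonpos_of_nonneg hε (sq_nonneg _)) (by norm_num)
    exact this.trans (Nat.cast_nonneg _)
  have h := G.mul_card_sq_le_ncard_rainbow c hsym hε.le
    (fun v => by rw [Fintype.card_fin]; exact hdeg v) z
  rw [Fintype.card_fin] at h
  exact (div_le_self (by positivity) (by norm_num)).trans h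

/-- In an edge-coloured graph with minimum colour degree at least `(2/3 + ε)n`, every
vertex `z` lies in at least `εn²/6` rainbow triangles, counted as unordered pairs. -/
theorem stmt_11 (n : ℕ) (ε : ℝ) (hε : 0 < ε) (G : SimpleGraph (Fin n))
    (c : Fin n → Fin n → ℕ) (hsym : ∀ u v, c u v = c v u)
    (hdeg : ∀ v : Fin n, (2 / 3 + ε) * n ≤ (Set.ncard ((c v) '' {w | G.Adj v w}) : ℝ))
    (z : Fin n) :
    ε * n ^ 2 / 6 ≤
      (Set.ncard {p : Finset (Fin n) | ∃ x x' : Fin n, p = {x, x'} ∧ x ≠ x' ∧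
        G.Adj z x ∧ G.Adj z x' ∧ G.Adj x x' ∧
        c z x ≠ c z x' ∧ c z x ≠ c x x' ∧ c z x' ≠ c x x'} : ℝ) :=
  stmt_11_general n ε G c hsym hdeg z
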